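/- arXiv:1606.05575 — 5 statements merged into one kernel-verified Lean document; each statement's English description precedes it below -/
import Mathlib

section
/- If f is an entire function, then the function x ↦ f(x^+) f(x^-) is entire, where x^+ = (√x + i/2)² and x^- = (√x − i/2)². -/
/-!
The function `z ↦ f((z + i/2)²) f((z − i/2)²)` is entire and equals `g (z²)`. Away from `0`,
squaring has a holomorphic local inverse, so `g` is holomorphic on `ℂ \ {0}`; at `0`, `g` is
continuous because `g x = g ((√x)²)` with `√` continuous at `0`, and the removable singularity
theorem finishes the argument.
-/

open Complex Filter Topology

theorem HasStrictDerivAt.differentiableAt_of_differentiableAt_comp {𝕜 E : Type*}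
    [NontriviallyNormedField 𝕜] [CompleteSpace 𝕜] [NormedAddCommGroup E] [NormedSpace 𝕜 E]
    {f : 𝕜 → 𝕜} {f' a : 𝕜} (hf : HasStrictDerivAt f f' a) (hf' : f' ≠ 0) {g : 𝕜 → E}
    (hg : DifferentiableAt 𝕜 (g ∘ f) a) : DifferentiableAt 𝕜 g (f a) := by
  have hL := hf.to_localInverse hf'
  have hLa : hf.localInverse f f' a hf' (f a) = a := HasStrictFDerivAt.localInverse_apply_image ..
  refine DifferentiableAt.congr_of_eventuallyEq ?_
    ((hf.eventually_right_inverse hf').mono fun y hy => congrArg g hy.symm)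
  exact (hLa ▸ hg).comp (f a) hL.hasDerivAt.differentiableAt

theorem Complex.continuousAt_zero_of_continuousAt_comp_sq {X : Type*} [TopologicalSpace X]
    {g : ℂ → X} (hg : ContinuousAt (fun z => g (z ^ 2)) 0) : ContinuousAt g 0 := by
  have hsqrt : ContinuousAt sqrt 0 := continuousAt_sqrt (by simp)
  have hg_sqrt : (fun x => g (sqrt x ^ 2)) = g :=
    funext fun x => by rw [sqrt, cpow_ofNat_inv_pow]
  rw [← hg_sqrt]
  exact (sqrt_zero ▸ hg).comp hsqrt

theorem Complex.differentiable_of_differentiable_comp_sq {E : Type*} [NormedAddCommGroup E]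
    [NormedSpace ℂ E] [CompleteSpace E] {g : ℂ → E}
    (hg : Differentiable ℂ fun z => g (z ^ 2)) : Differentiable ℂ g := by
  have hne : ∀ x ≠ 0, DifferentiableAt ℂ g x := fun x hx => by
    rw [← cpow_ofNat_inv_pow x 2]
    exact (hasStrictDerivAt_pow 2 _).differentiableAt_of_differentiableAt_comp
      (by simpa using hx) (hg _)
  intro x
  rcases eq_or_ne x 0 with rfl | hx
  · exact (analyticAt_of_differentiable_on_punctured_nhds_of_continuousAt
      (eventually_nhdsWithin_of_forall hne)
      (continuousAt_zero_of_continuousAt_comp_sq (hg 0).continuousAt)).differentiableAt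
  · exact hne x hx

/-- If `f` is entire, then `x ↦ f(x⁺) f(x⁻)` is entire, where `x⁺ = (√x + i/2)²`
and `x⁻ = (√x − i/2)²`; the product is independent of the branch of square root,
so it is formalized as any function `g` satisfying `g (z²) = f((z+i/2)²) f((z−i/2)²)`. -/
theorem wilson_product_shift_entire
    (f g : ℂ → ℂ) (hf : Differentiable ℂ f)
    (hg : ∀ x z : ℂ, z ^ 2 = x → g x = f ((z + I / 2) ^ 2) * f ((z - I / 2) ^ 2)) :
    Differentiable ℂ g := by
  refine differentiable_of_differentiable_comp_sq ?_
  have hg_sq : (fun z => g (z ^ 2)) = fun z => f ((z + I / 2) ^ 2) * f ((z - I / 2) ^ 2) :=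
    funext fun z => hg _ z rfl
  rw [hg_sq]
  fun_prop
end

section
/- If f is a meromorphic function on ℂ, then D_W f is meromorphic on ℂ. -/
open Complex

private lemma evne (z0 c : ℂ) : ∀ᶠ z in nhdsWithin z0 {z0}ᶜ, z ≠ c := by
  rcases eq_or_ne c z0 with rfl | h
  · exact eventually_mem_nhdsWithin
  · exact Filter.Eventually.filter_mono nhdsWithin_le_nhds (eventually_ne_nhds h.symm)

private lemma meromorphicAt_comp {f p : ℂ → ℂ} {z0 : ℂ}
    (hf : MeromorphicAt f (p z0)) (hp : AnalyticAt ℂ p z0)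
    (hne : ∀ᶠ z in nhdsWithin z0 {z0}ᶜ, p z ≠ p z0) :
    MeromorphicAt (fun z => f (p z)) z0 := by
  obtain ⟨n, hn⟩ := hf
  have hA : AnalyticAt ℂ (fun z => (p z - p z0) ^ n • f (p z)) z0 := hn.comp hp
  have hq : AnalyticAt ℂ (fun z => (p z - p z0) ^ n) z0 :=
    (hp.sub analyticAt_const).pow n
  have hM : MeromorphicAt
      (fun z => ((p z - p z0) ^ n)⁻¹ * ((p z - p z0) ^ n • f (p z))) z0 := by
    exact (hq.meromorphicAt.inv).mul hA.meromorphicAt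
  refine hM.congr ?_
  filter_upwards [hne] with z hz
  have h0 : (p z - p z0) ^ n ≠ 0 := pow_ne_zero _ (sub_ne_zero.mpr hz)
  simp [smul_eq_mul, ← mul_assoc, inv_mul_cancel₀ h0]

private lemma sqrt_branch {x0 : ℂ} (hx0 : x0 ≠ 0) :
    ∃ s : ℂ → ℂ, AnalyticAt ℂ s x0 ∧ ∀ w : ℂ, w ≠ 0 → s w ^ 2 = w ∧ s w ≠ 0 := by
  obtain ⟨z0, hz0⟩ : ∃ z0 : ℂ, z0 ^ 2 = x0 :=
    IsAlgClosed.exists_pow_nat_eq x0 zero_lt_two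
  have hz0' : z0 ≠ 0 := by
    intro h; apply hx0; rw [← hz0, h]; ring
  refine ⟨fun w => z0 * Complex.exp (Complex.log (w / x0) / 2), ?_, ?_⟩
  · have hdiv : AnalyticAt ℂ (fun w : ℂ => w / x0) x0 :=
      (analyticAt_id.div analyticAt_const hx0)
    have hlog : AnalyticAt ℂ (fun w : ℂ => Complex.log (w / x0)) x0 := by
      apply AnalyticAt.comp (g := Complex.log) ?_ hdiv
      apply analyticAt_clog
      simp only [div_self hx0]
      exact Complex.one_mem_slitPlane
    exact analyticAt_const.mul
      (analyticAt_cexp.comp (hlog.div analyticAt_const (by norm_num)))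
  · intro w hw
    constructor
    · have hwx : w / x0 ≠ 0 := div_ne_zero hw hx0
      have : Complex.exp (Complex.log (w / x0) / 2) ^ 2 = w / x0 := by
        rw [sq, ← Complex.exp_add]
        rw [show Complex.log (w / x0) / 2 + Complex.log (w / x0) / 2
          = Complex.log (w / x0) by ring]
        exact Complex.exp_log hwx
      rw [mul_pow, this, hz0]
      field_simp
    · exact mul_ne_zero hz0' (Complex.exp_ne_zero _)

/-- If `f` is meromorphic on `ℂ`, then `D_W f` is meromorphic on `ℂ`; here
`D_W f` is formalized as any function `g` satisfying
`g (z²) = (f((z+i/2)²) − f((z−i/2)²))/(2iz)` for all `z ≠ 0`. -/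
theorem wilson_of_meromorphic_is_meromorphic
    (f g : ℂ → ℂ) (hf : MeromorphicOn f Set.univ)
    (hg : ∀ x z : ℂ, z ^ 2 = x → z ≠ 0 →
      g x = (f ((z + I / 2) ^ 2) - f ((z - I / 2) ^ 2)) / (2 * I * z)) :
    MeromorphicOn g Set.univ := by
  set F : ℂ → ℂ := fun z => (f ((z + I / 2) ^ 2) - f ((z - I / 2) ^ 2)) / (2 * I * z)
    with hFdef
  -- F is meromorphic everywhere
  have hF : ∀ z0 : ℂ, MeromorphicAt F z0 := by
    intro z0
    have hcomp : ∀ a : ℂ, MeromorphicAt (fun z => f ((z + a) ^ 2)) z0 := by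
      intro a
      refine meromorphicAt_comp (p := fun z => (z + a) ^ 2) (hf _ (Set.mem_univ _)) ?_ ?_
      · exact (analyticAt_id.add analyticAt_const).pow 2
      · filter_upwards [evne z0 z0, evne z0 (-(z0 + 2 * a))] with z hz hz2 h
        have : (z - z0) * (z + z0 + 2 * a) = 0 := by linear_combination h
        rcases mul_eq_zero.mp this with h' | h'
        · exact hz (by linear_combination h')
        · exact hz2 (by linear_combination h')
    have h1 := hcomp (I / 2)
    have h2 : MeromorphicAt (fun z => f ((z - I / 2) ^ 2)) z0 := by
      have := hcomp (-(I / 2))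
      simpa [sub_eq_add_neg] using this
    have hden : MeromorphicAt (fun z : ℂ => 2 * I * z) z0 :=
      (analyticAt_const.mul analyticAt_id).meromorphicAt
    exact (h1.sub h2).div hden
  -- key: g (z^2) = F z for z ≠ 0
  have hgF : ∀ z : ℂ, z ≠ 0 → g (z ^ 2) = F z := fun z hz => hg (z ^ 2) z rfl hz
  -- F is even
  have hFeven : ∀ z : ℂ, F (-z) = F z := by
    intro z
    rcases eq_or_ne z 0 with rfl | hz
    · rw [neg_zero]
    · simp only [hFdef]
      rw [show (-z + I / 2) ^ 2 = (z - I / 2) ^ 2 by ring,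
        show (-z - I / 2) ^ 2 = (z + I / 2) ^ 2 by ring]
      have h1 : 2 * I * -z ≠ 0 :=
        mul_ne_zero (mul_ne_zero two_ne_zero I_ne_zero) (neg_ne_zero.mpr hz)
      have h2 : 2 * I * z ≠ 0 := mul_ne_zero (mul_ne_zero two_ne_zero I_ne_zero) hz
      rw [div_eq_div_iff h1 h2]
      ring
  intro x0 _
  by_cases hx0 : x0 = 0
  · subst hx0
    obtain ⟨n, hn⟩ := hF 0
    have hn' : AnalyticAt ℂ (fun z => z ^ n * F z) 0 := by
      simpa [smul_eq_mul] using hn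
    set A : ℂ → ℂ := fun z => z ^ (2 * (n + 1)) * F z with hAdef
    have hA : AnalyticAt ℂ A 0 := by
      have hEq : A = fun z => z ^ (n + 2) * (z ^ n * F z) := by
        funext z
        simp only [hAdef]
        ring
      rw [hEq]
      exact (analyticAt_id.pow _).mul hn'
    have hA0 : A 0 = 0 := by simp [hAdef]
    have key : ∀ z : ℂ, z ≠ 0 → (z ^ 2) ^ (n + 1) * g (z ^ 2) = A z := by
      intro z hz
      rw [hgF z hz]
      simp only [hAdef]
      rw [pow_mul]
    have hh : AnalyticAt ℂ (fun x => x ^ (n + 1) * g x) 0 := by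
      apply Complex.analyticAt_of_differentiable_on_punctured_nhds_of_continuousAt
      · -- differentiable on a punctured neighborhood
        obtain ⟨r, hr, hball⟩ := Metric.eventually_nhds_iff.mp hA.eventually_analyticAt
        have hev : ∀ᶠ x in nhdsWithin (0 : ℂ) {(0 : ℂ)}ᶜ, dist x 0 < r ^ 2 :=
          Filter.Eventually.filter_mono nhdsWithin_le_nhds
            (Metric.eventually_nhds_iff.mpr ⟨r ^ 2, by positivity, fun {y} hy => hy⟩)
        filter_upwards [hev, evne 0 0] with x hxr hx0
        obtain ⟨s, hs, hsq⟩ := sqrt_branch hx0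
        obtain ⟨hsx1, hsx2⟩ := hsq x hx0
        have hsxr : dist (s x) 0 < r := by
          rw [dist_zero_right]
          apply lt_of_pow_lt_pow_left₀ 2 hr.le
          rw [← norm_pow, hsx1]
          rwa [dist_zero_right] at hxr
        have hAx : AnalyticAt ℂ A (s x) := hball hsxr
        have hcomp : AnalyticAt ℂ (fun w => A (s w)) x := hAx.comp hs
        have heq : (fun w => A (s w)) =ᶠ[nhds x] (fun x => x ^ (n + 1) * g x) := by
          filter_upwards [eventually_ne_nhds hx0] with w hw0
          obtain ⟨hw1, hw2⟩ := hsq w hw0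
          have := key (s w) hw2
          rw [hw1] at this
          exact this.symm
        exact (hcomp.congr heq).differentiableAt
      · -- continuity at 0
        have h0 : (fun x : ℂ => x ^ (n + 1) * g x) 0 = 0 := by simp
        rw [Metric.continuousAt_iff]
        intro ε hε
        obtain ⟨δ, hδ, hAδ⟩ := Metric.continuousAt_iff.mp hA.continuousAt ε hε
        refine ⟨δ ^ 2, by positivity, fun {x} hx => ?_⟩
        rw [show (0:ℂ) ^ (n + 1) * g 0 = 0 by simp]; rw [dist_zero_right]
        rcases eq_or_ne x 0 with rfl | hx0
        · simpa using hε
        · obtain ⟨z, hz⟩ : ∃ z : ℂ, z ^ 2 = x := IsAlgClosed.exists_pow_nat_eq x zero_lt_two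
          have hz0 : z ≠ 0 := by rintro rfl; exact hx0 (by simpa using hz.symm)
          have hxA : x ^ (n + 1) * g x = A z := by rw [← hz]; exact key z hz0
          have hzδ : dist z 0 < δ := by
            rw [dist_zero_right]
            apply lt_of_pow_lt_pow_left₀ 2 hδ.le
            rw [← norm_pow, hz]
            rwa [dist_zero_right] at hx
          have := hAδ hzδ
          rw [hA0, dist_zero_right] at this
          rwa [hxA]
    exact ⟨n + 1, by simpa [smul_eq_mul] using hh⟩
  · -- nonzero point: use a local square-root branch
    obtain ⟨s, hs, hsq⟩ := sqrt_branch hx0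
    have hsx0 : s x0 ≠ 0 := (hsq x0 hx0).2
    have hne : ∀ᶠ w in nhdsWithin x0 {x0}ᶜ, s w ≠ s x0 := by
      filter_upwards [evne x0 x0, (Filter.Eventually.filter_mono nhdsWithin_le_nhds
        (eventually_ne_nhds hx0 : ∀ᶠ w in nhds x0, w ≠ 0))] with w hw hw0 h
      apply hw
      have := (hsq w hw0).1
      rw [← this, h, (hsq x0 hx0).1]
    have hFs : MeromorphicAt (fun w => F (s w)) x0 := meromorphicAt_comp (hF _) hs hne
    refine hFs.congr ?_
    have : ∀ᶠ w in nhds x0, g w = F (s w) := by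
      filter_upwards [eventually_ne_nhds hx0] with w hw0
      obtain ⟨h1, h2⟩ := hsq w hw0
      rw [← h1, hgF (s w) h2, h1]
    exact ((this.mono fun w hw => hw.symm).filter_mono nhdsWithin_le_nhds)
end

section
/- If f is a rational function, then D_W f is a rational function. -/
open Complex Polynomial

private lemma coeff_comp_neg_X (p : ℂ[X]) (n : ℕ) :
    (p.comp (-X)).coeff n = (-1) ^ n * p.coeff n := by
  induction p using Polynomial.induction_on' with
  | add p q hp hq => simp [add_comp, hp, hq, mul_add]
  | monomial k a =>
    rw [monomial_comp, neg_pow]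
    have h1 : ((-1 : ℂ[X]) ^ k) = C ((-1 : ℂ) ^ k) := by
      rw [map_pow, map_neg, map_one]
    rw [h1, mul_comm (C ((-1:ℂ)^k)) (X ^ k), ← mul_assoc, coeff_mul_C, coeff_C_mul,
      coeff_monomial, coeff_X_pow]
    rcases eq_or_ne k n with rfl | h
    · simp [mul_comm]
    · simp [h, Ne.symm h]

private lemma even_coeffs_of_even (M : ℂ[X]) (hM : ∀ z : ℂ, M.eval (-z) = M.eval z) :
    ∀ i, ¬ 2 ∣ i → M.coeff i = 0 := by
  intro i hi
  have hcomp : M.comp (-X) = M := by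
    apply Polynomial.funext
    intro r
    simp [eval_comp, hM]
  have h2 := congrArg (fun p : ℂ[X] => p.coeff i) hcomp
  rw [coeff_comp_neg_X, (Nat.odd_iff.2 (by omega : i % 2 = 1)).neg_one_pow, neg_one_mul] at h2
  linear_combination (-1/2 : ℂ) * h2

private lemma expand_contract_two (M : ℂ[X]) (h : ∀ i, ¬ 2 ∣ i → M.coeff i = 0) :
    Polynomial.expand ℂ 2 (Polynomial.contract 2 M) = M := by
  ext n
  rw [coeff_expand (by norm_num : 0 < 2)]
  split_ifs with hd
  · rw [coeff_contract two_ne_zero, Nat.div_mul_cancel hd]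
  · rw [h n hd]

/-- If `f` is a rational function, then `D_W f` is a rational function:
if `f` agrees with `p/q` away from the zeros of `q`, then any `g` with
`g (z²) = (f((z+i/2)²) − f((z−i/2)²))/(2iz)` agrees with a quotient of
polynomials `P/Q` away from the zeros of `Q` (and away from the origin). -/
theorem wilson_of_rational_is_rational
    (f g : ℂ → ℂ)
    (hf : ∃ p q : Polynomial ℂ, q ≠ 0 ∧
      ∀ x : ℂ, q.eval x ≠ 0 → f x = p.eval x / q.eval x)
    (hg : ∀ x z : ℂ, z ^ 2 = x → z ≠ 0 →
      g x = (f ((z + I / 2) ^ 2) - f ((z - I / 2) ^ 2)) / (2 * I * z)) :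
    ∃ P Q : Polynomial ℂ, Q ≠ 0 ∧
      ∀ x : ℂ, x ≠ 0 → Q.eval x ≠ 0 → g x = P.eval x / Q.eval x := by
  obtain ⟨p, q, hq, hfpq⟩ := hf
  -- shifted polynomials in the variable z
  set sP : ℂ[X] := (X + C (I / 2)) ^ 2 with hsP
  set sM : ℂ[X] := (X - C (I / 2)) ^ 2 with hsM
  set A : ℂ[X] := p.comp sP * q.comp sM - p.comp sM * q.comp sP with hA
  set B : ℂ[X] := C (2 * I) * X * (q.comp sP * q.comp sM) with hB
  set M : ℂ[X] := X * A with hMdef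
  set N : ℂ[X] := X * B with hNdef
  have hsevP : ∀ z : ℂ, sP.eval (-z) = sM.eval z := by
    intro z
    simp only [hsP, hsM, eval_pow, eval_add, eval_sub, eval_X, eval_C]
    ring
  have hsevM : ∀ z : ℂ, sM.eval (-z) = sP.eval z := by
    intro z
    simp only [hsP, hsM, eval_pow, eval_add, eval_sub, eval_X, eval_C]
    ring
  have hMev : ∀ z : ℂ, M.eval (-z) = M.eval z := by
    intro z
    simp only [hMdef, hA, eval_mul, eval_sub, eval_X, eval_comp, hsevP, hsevM]
    ring
  have hNev : ∀ z : ℂ, N.eval (-z) = N.eval z := by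
    intro z
    simp only [hNdef, hB, eval_mul, eval_X, eval_C, eval_comp, hsevP, hsevM]
    ring
  have hexpM : Polynomial.expand ℂ 2 (Polynomial.contract 2 M) = M :=
    expand_contract_two M (even_coeffs_of_even M hMev)
  have hexpN : Polynomial.expand ℂ 2 (Polynomial.contract 2 N) = N :=
    expand_contract_two N (even_coeffs_of_even N hNev)
  refine ⟨Polynomial.contract 2 M, Polynomial.contract 2 N, ?_, ?_⟩
  · intro h
    rw [h, map_zero] at hexpN
    have hN0 : N ≠ 0 := by
      have hcP : q.comp sP ≠ 0 := by
        intro hc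
        rcases Polynomial.comp_eq_zero_iff.1 hc with h1 | ⟨_, h2⟩
        · exact hq h1
        · apply_fun Polynomial.natDegree at h2
          rw [hsP, natDegree_pow, natDegree_X_add_C, natDegree_C] at h2
          omega
      have hcM : q.comp sM ≠ 0 := by
        intro hc
        rcases Polynomial.comp_eq_zero_iff.1 hc with h1 | ⟨_, h2⟩
        · exact hq h1
        · apply_fun Polynomial.natDegree at h2
          rw [hsM, natDegree_pow, natDegree_X_sub_C, natDegree_C] at h2
          omega
      simp only [hNdef, hB]
      intro h0
      simp only [mul_eq_zero, X_ne_zero, or_false, false_or, C_eq_zero] at h0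
      rcases h0 with h0 | h0 | h0
      · rcases h0 with h0 | h0
        · exact two_ne_zero h0
        · exact Complex.I_ne_zero h0
      · exact hcP h0
      · exact hcM h0
    exact hN0 hexpN.symm
  · intro x hx hQx
    obtain ⟨z, hz⟩ : ∃ z : ℂ, z ^ 2 = x :=
      ⟨x ^ ((2 : ℕ) : ℂ)⁻¹, Complex.cpow_nat_inv_pow x two_ne_zero⟩
    have hz0 : z ≠ 0 := by rintro rfl; exact hx (by simpa using hz.symm)
    have hPM : (Polynomial.contract 2 M).eval x = M.eval z := by
      rw [← hz, ← Polynomial.expand_eval 2 _ z, hexpM]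
    have hQN : (Polynomial.contract 2 N).eval x = N.eval z := by
      rw [← hz, ← Polynomial.expand_eval 2 _ z, hexpN]
    rw [hQN] at hQx
    have hsPz : sP.eval z = (z + I / 2) ^ 2 := by simp [hsP]
    have hsMz : sM.eval z = (z - I / 2) ^ 2 := by simp [hsM]
    have hNval : N.eval z = z * (2 * I * z * (q.eval ((z + I / 2) ^ 2) *
        q.eval ((z - I / 2) ^ 2))) := by
      simp only [hNdef, hB, eval_mul, eval_X, eval_C, eval_comp, hsPz, hsMz]
    have hqP : q.eval ((z + I / 2) ^ 2) ≠ 0 := by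
      intro h; apply hQx; rw [hNval, h]; ring
    have hqM : q.eval ((z - I / 2) ^ 2) ≠ 0 := by
      intro h; apply hQx; rw [hNval, h]; ring
    rw [hg x z hz hz0, hfpq _ hqP, hfpq _ hqM, hPM, hQN]
    have hMval : M.eval z = z * (p.eval ((z + I / 2) ^ 2) * q.eval ((z - I / 2) ^ 2)
        - p.eval ((z - I / 2) ^ 2) * q.eval ((z + I / 2) ^ 2)) := by
      simp only [hMdef, hA, eval_mul, eval_sub, eval_X, eval_comp, hsPz, hsMz]
    rw [hMval, hNval]
    have key : ∀ a b c d : ℂ, b ≠ 0 → d ≠ 0 →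
        (a / b - c / d) / (2 * I * z) = z * (a * d - c * b) / (z * (2 * I * z * (b * d))) := by
      intro a b c d hb hd
      have hI : (2 : ℂ) * I * z ≠ 0 := by
        simp [Complex.I_ne_zero, hz0]
      field_simp
    exact key _ _ _ _ hqP hqM
end

section
/- Let R > 1/4, 0 ≤ r < (√R − 1/2)², |z| = √r, and w ∈ D(0; r). Then |ln| (R² − w̄(z+i/2)²) / (R² − w̄ z²) || ≤ (2√r + 1/2) / (R − (√r + 1/2)²). -/
/-! Numerator and denominator both lie within `r (√r + 1/2)²` of `R²`, so their moduli are at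
least `m = R² − r (√r + 1/2)² > 0`, and they differ by `w̄ (i z − 1/4)`, of modulus at most
`r (√r + 1/4)`. Since `|log (a / b)| ≤ |a − b| / m` for `a, b ≥ m`, the left side is at most
`r (√r + 1/4) / m`, and with `r = (√r)²` this is bounded by the right side. -/

open Complex Real

lemma Real.log_div_le_abs_sub_div {a b m : ℝ} (ha : 0 < a) (hm : 0 < m) (hb : m ≤ b) :
    Real.log (a / b) ≤ |a - b| / m := by
  have hb0 : 0 < b := hm.trans_le hb
  calc Real.log (a / b) ≤ a / b - 1 := Real.log_le_sub_one_of_pos (div_pos ha hb0)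
    _ = (a - b) / b := by field_simp
    _ ≤ |a - b| / b := by gcongr; exact le_abs_self _
    _ ≤ |a - b| / m := by gcongr

lemma Real.abs_log_div_le_abs_sub_div {a b m : ℝ} (hm : 0 < m) (ha : m ≤ a) (hb : m ≤ b) :
    |Real.log (a / b)| ≤ |a - b| / m := by
  have ha0 : 0 < a := hm.trans_le ha
  have hb0 : 0 < b := hm.trans_le hb
  refine abs_le.2 ⟨?_, Real.log_div_le_abs_sub_div ha0 hm hb⟩
  have := Real.log_div_le_abs_sub_div hb0 hm ha
  rw [Real.log_div hb0.ne' ha0.ne', abs_sub_comm] at this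
  rw [Real.log_div ha0.ne' hb0.ne']
  linarith

lemma Complex.abs_log_norm_div_le {a b : ℂ} {m : ℝ} (hm : 0 < m) (ha : m ≤ ‖a‖) (hb : m ≤ ‖b‖) :
    |Real.log ‖a / b‖| ≤ ‖a - b‖ / m := by
  rw [norm_div]
  exact (Real.abs_log_div_le_abs_sub_div hm ha hb).trans
    (div_le_div_of_nonneg_right (abs_norm_sub_norm_le a b) hm.le)

lemma Complex.sub_norm_mul_sq_le_norm_sub_conj_mul_sq (R : ℝ) {w ζ : ℂ} {r t : ℝ}
    (hw : ‖w‖ ≤ r) (hζ : ‖ζ‖ ≤ t) :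
    R ^ 2 - r * t ^ 2 ≤ ‖(R : ℂ) ^ 2 - (starRingEnd ℂ) w * ζ ^ 2‖ := by
  have hprod : ‖(starRingEnd ℂ) w * ζ ^ 2‖ ≤ r * t ^ 2 := by
    rw [norm_mul, Complex.norm_conj, norm_pow]
    gcongr
    exact (norm_nonneg w).trans hw
  have hR : ‖((R : ℂ) ^ 2)‖ = R ^ 2 := by
    rw [← Complex.ofReal_pow, Complex.norm_real, Real.norm_of_nonneg (sq_nonneg R)]
  linarith [norm_sub_norm_le ((R : ℂ) ^ 2) ((starRingEnd ℂ) w * ζ ^ 2)]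

lemma Complex.norm_sub_conj_mul_shift_sq_sub_le (c : ℂ) {w z : ℂ} {r s : ℝ}
    (hw : ‖w‖ ≤ r) (hz : ‖z‖ = s) :
    ‖(c - (starRingEnd ℂ) w * (z + I / 2) ^ 2) - (c - (starRingEnd ℂ) w * z ^ 2)‖ ≤
      r * (s + 1 / 4) := by
  have hdiff : (c - (starRingEnd ℂ) w * (z + I / 2) ^ 2) - (c - (starRingEnd ℂ) w * z ^ 2) =
      -((starRingEnd ℂ) w * (I * z - 1 / 4)) := by
    ring_nf; rw [Complex.I_sq]; ring
  have hshift : ‖I * z - 1 / 4‖ ≤ s + 1 / 4 := by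
    refine (norm_sub_le _ _).trans (le_of_eq ?_)
    rw [norm_mul, Complex.norm_I, one_mul, hz]; norm_num
  rw [hdiff, norm_neg, norm_mul, Complex.norm_conj]
  exact mul_le_mul hw hshift (norm_nonneg _) ((norm_nonneg w).trans hw)

lemma sq_mul_add_quarter_div_le {R s : ℝ} (hs : 0 ≤ s) (hsR : (s + 1 / 2) ^ 2 < R) :
    s ^ 2 * (s + 1 / 4) / (R ^ 2 - s ^ 2 * (s + 1 / 2) ^ 2) ≤
      (2 * s + 1 / 2) / (R - (s + 1 / 2) ^ 2) := by
  have hgap : 0 < R - (s + 1 / 2) ^ 2 := sub_pos.2 hsR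
  have hR : 0 < R := (sq_nonneg _).trans_lt hsR
  rw [div_le_div_iff₀ (by nlinarith) hgap]
  nlinarith [mul_nonneg (mul_nonneg hs hs) hgap.le, mul_nonneg hs hgap.le, mul_nonneg hs hR.le]

theorem log_blaschke_shift_estimate_general
    (R r : ℝ) (hR : 1 / 4 < R) (hr : r < (Real.sqrt R - 1 / 2) ^ 2)
    (z : ℂ) (hz : ‖z‖ = Real.sqrt r)
    (w : ℂ) (hw : ‖w‖ < r) :
    |Real.log ‖
        (((R : ℂ) ^ 2 - (starRingEnd ℂ) w * (z + I / 2) ^ 2) /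
          ((R : ℂ) ^ 2 - (starRingEnd ℂ) w * z ^ 2))‖| ≤
      (2 * Real.sqrt r + 1 / 2) / (R - (Real.sqrt r + 1 / 2) ^ 2) := by
  set s := Real.sqrt r
  have hs : 0 ≤ s := Real.sqrt_nonneg r
  have hsr : s ^ 2 = r := Real.sq_sqrt ((norm_nonneg w).trans hw.le)
  have hhalf : 1 / 2 < Real.sqrt R := by
    rw [Real.lt_sqrt (by norm_num)]; linarith
  have hsR : (s + 1 / 2) ^ 2 < R := by
    rw [← Real.lt_sqrt (by positivity)]
    have := (pow_lt_pow_iff_left₀ hs (by linarith) two_ne_zero).1 (hsr ▸ hr)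
    linarith
  have hzs : ‖z + I / 2‖ ≤ s + 1 / 2 := by
    refine (norm_add_le _ _).trans (le_of_eq ?_)
    rw [hz, norm_div, Complex.norm_I]; norm_num
  have hm : 0 < R ^ 2 - r * (s + 1 / 2) ^ 2 := by
    rw [← hsr]; nlinarith [mul_nonneg hs hs]
  refine (Complex.abs_log_norm_div_le hm
    (Complex.sub_norm_mul_sq_le_norm_sub_conj_mul_sq R hw.le hzs)
    (Complex.sub_norm_mul_sq_le_norm_sub_conj_mul_sq R hw.le (by linarith))).trans ?_
  refine (div_le_div_of_nonneg_right (Complex.norm_sub_conj_mul_shift_sq_sub_le _ hw.le hz)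
    hm.le).trans ?_
  rw [← hsr]
  exact sq_mul_add_quarter_div_le hs hsR

/-- For `R > 1/4`, `0 ≤ r < (√R − 1/2)²`, `|z| = √r` and `|w| < r`:
`|ln|(R² − w̄(z+i/2)²)/(R² − w̄ z²)|| ≤ (2√r + 1/2)/(R − (√r + 1/2)²)`. -/
theorem log_blaschke_shift_estimate
    (R r : ℝ) (hR : 1 / 4 < R) (hr0 : 0 ≤ r) (hr : r < (Real.sqrt R - 1 / 2) ^ 2)
    (z : ℂ) (hz : ‖z‖ = Real.sqrt r)
    (w : ℂ) (hw : ‖w‖ < r) :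
    |Real.log ‖
        (((R : ℂ) ^ 2 - (starRingEnd ℂ) w * (z + I / 2) ^ 2) /
          ((R : ℂ) ^ 2 - (starRingEnd ℂ) w * z ^ 2))‖| ≤
      (2 * Real.sqrt r + 1 / 2) / (R - (Real.sqrt r + 1 / 2) ^ 2) :=
  log_blaschke_shift_estimate_general R r hR hr z hz w hw
end

section
/- For every α with 0 < α < 1, every r > 0 and every w ∈ ℂ: (1/2π) ∫₀^{2π} dθ / |r e^{2iθ} − w|^α ≤ 1/((1−α) r^α). -/
/-!
Put `φ = arg w` and `ψ = 2θ`. The point `r e^{iψ}` lies at distance `r |sin (ψ - φ)|` from the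
line `ℝ w`, so the integrand is at most `r^{-α} |sin (2θ - φ)|^{-α}` off the countable set where
the sine vanishes, and `θ ↦ 2θ - φ` turns `[0, 2π]` into four periods of the `π`-periodic function
`|sin|^{-α}`. On a half-period, Jordan's inequality `sin u ≥ 2u/π` gives
`∫₀^{π/2} |sin u|^{-α} du ≤ (π/2)^α ∫₀^{π/2} u^{-α} du = (π/2)/(1-α)`, and evenness doubles this
to the bound `π/(1-α)` over a full period.
-/

open Complex Real MeasureTheory intervalIntegral

theorem intervalIntegrable_comp_mul_sub {E : Type*} [NormedAddCommGroup E] {f : ℝ → E}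
    (h_int : ∀ a b, IntervalIntegrable f volume a b) {c : ℝ} (hc : c ≠ 0) (d a b : ℝ) :
    IntervalIntegrable (fun x => f (c * x - d)) volume a b := by
  simpa [hc] using ((h_int (c * a - d) (c * b - d)).comp_sub_right d).comp_mul_left (c := c)

theorem Function.Periodic.intervalIntegral_comp_two_mul_sub {E : Type*} [NormedAddCommGroup E]
    [NormedSpace ℝ E] {f : ℝ → E} {T : ℝ} (hf : Function.Periodic f T)
    (h_int : ∀ a b, IntervalIntegrable f volume a b) (φ : ℝ) :
    ∫ θ in 0..2 * T, f (2 * θ - φ) = (2 : ℝ) • ∫ x in 0..T, f x := by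
  have h4 : 2 * (2 * T) - φ = -φ + (4 : ℤ) • T := by rw [zsmul_eq_mul]; push_cast; ring
  rw [integral_comp_mul_sub f two_ne_zero, mul_zero, zero_sub, h4,
    hf.intervalIntegral_add_zsmul_eq 4 (-φ) h_int, hf.intervalIntegral_add_eq (-φ) 0, zero_add,
    smul_comm, ← smul_assoc]
  norm_num

section AbsSinRpowNeg

variable {α : ℝ}

theorem periodic_abs_sin_rpow (a : ℝ) : Function.Periodic (fun u => |Real.sin u| ^ a) π :=
  fun u => by simp [Real.sin_add_pi]

theorem abs_sin_rpow_neg_le (hα : 0 ≤ α) {u : ℝ} (hu : u ∈ Set.Ioc 0 (π / 2)) :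
    |Real.sin u| ^ (-α) ≤ (π / 2) ^ α * u ^ (-α) := by
  have jordan : 2 / π * u ≤ |Real.sin u| :=
    (mul_le_sin hu.1.le hu.2).trans (le_abs_self _)
  calc |Real.sin u| ^ (-α) ≤ (2 / π * u) ^ (-α) :=
        rpow_le_rpow_of_nonpos (by have := hu.1; positivity) jordan (by linarith)
    _ = (π / 2) ^ α * u ^ (-α) := by
        rw [mul_rpow (by positivity) hu.1.le, rpow_neg (by positivity),
          ← inv_rpow (by positivity), inv_div]

theorem intervalIntegrable_abs_sin_rpow_neg_zero_half_pi (hα0 : 0 ≤ α) (hα1 : α < 1) :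
    IntervalIntegrable (fun u => |Real.sin u| ^ (-α)) volume 0 (π / 2) := by
  refine ((intervalIntegrable_rpow' (by linarith : -1 < -α)).const_mul ((π / 2) ^ α)).mono_fun'
    (by fun_prop : Measurable fun u => |Real.sin u| ^ (-α)).aestronglyMeasurable ?_
  rw [Set.uIoc_of_le (by positivity)]
  filter_upwards [ae_restrict_mem measurableSet_Ioc] with u hu
  rw [norm_of_nonneg (by positivity)]
  exact abs_sin_rpow_neg_le hα0 hu

theorem integral_abs_sin_rpow_neg_zero_half_pi_le (hα0 : 0 ≤ α) (hα1 : α < 1) :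
    ∫ u in 0..π / 2, |Real.sin u| ^ (-α) ≤ π / (1 - α) / 2 := by
  have hα : -1 < -α := by linarith
  calc ∫ u in 0..π / 2, |Real.sin u| ^ (-α)
      ≤ ∫ u in 0..π / 2, (π / 2) ^ α * u ^ (-α) :=
        integral_mono_on_of_le_Ioo (by positivity)
          (intervalIntegrable_abs_sin_rpow_neg_zero_half_pi hα0 hα1)
          ((intervalIntegrable_rpow' hα).const_mul _)
          fun u hu => abs_sin_rpow_neg_le hα0 (Set.Ioo_subset_Ioc_self hu)
    _ = π / (1 - α) / 2 := by
        rw [intervalIntegral.integral_const_mul, integral_rpow (Or.inl hα),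
          zero_rpow (by linarith), sub_zero, ← mul_div_assoc, ← rpow_add (by positivity),
          add_neg_cancel_left, rpow_one, neg_add_eq_sub, div_right_comm]

theorem intervalIntegrable_abs_sin_rpow_neg (hα0 : 0 ≤ α) (hα1 : α < 1) (a b : ℝ) :
    IntervalIntegrable (fun u => |Real.sin u| ^ (-α)) volume a b := by
  have h := intervalIntegrable_abs_sin_rpow_neg_zero_half_pi hα0 hα1
  have hneg : IntervalIntegrable (fun u => |Real.sin u| ^ (-α)) volume (-(π / 2)) 0 := by
    simpa using ((IntervalIntegrable.iff_comp_neg).1 h).symm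
  refine (periodic_abs_sin_rpow _).intervalIntegrable pi_ne_zero (t := -(π / 2)) ?_ a b
  convert hneg.trans h using 1
  ring

theorem integral_abs_sin_rpow_neg_le (hα0 : 0 ≤ α) (hα1 : α < 1) :
    ∫ u in 0..π, |Real.sin u| ^ (-α) ≤ π / (1 - α) := by
  have heven :
      ∫ u in -(π / 2)..0, |Real.sin u| ^ (-α) = ∫ u in 0..π / 2, |Real.sin u| ^ (-α) := by
    simpa using (integral_comp_neg (a := 0) (b := π / 2) fun u => |Real.sin u| ^ (-α)).symm
  have hperiod := (periodic_abs_sin_rpow (-α)).intervalIntegral_add_eq 0 (-(π / 2))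
  rw [zero_add, neg_add_eq_sub, sub_half] at hperiod
  have hint := intervalIntegrable_abs_sin_rpow_neg hα0 hα1
  rw [hperiod, ← integral_add_adjacent_intervals (hint _ 0) (hint 0 _), heven]
  linarith [integral_abs_sin_rpow_neg_zero_half_pi_le hα0 hα1]

end AbsSinRpowNeg

theorem mul_abs_sin_sub_arg_le_norm_sub {r : ℝ} (hr : 0 ≤ r) (ψ : ℝ) (w : ℂ) :
    r * |Real.sin (ψ - arg w)| ≤ ‖(r : ℂ) * exp (ψ * I) - w‖ := by
  have hrot : ((r : ℂ) * exp (ψ * I) - w) * exp ((-arg w : ℝ) * I) =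
      (r : ℂ) * exp ((ψ - arg w : ℝ) * I) - ‖w‖ := by
    have hw : w * exp ((-arg w : ℝ) * I) = ‖w‖ := by
      nth_rw 1 [← norm_mul_exp_arg_mul_I w]
      rw [mul_assoc, ← Complex.exp_add]
      push_cast
      simp
    rw [sub_mul, hw, mul_assoc, ← Complex.exp_add]
    push_cast
    ring_nf
  calc r * |Real.sin (ψ - arg w)|
      = |((r : ℂ) * exp ((ψ - arg w : ℝ) * I) - ‖w‖).im| := by
        rw [sub_im, ofReal_im, sub_zero, im_ofReal_mul, exp_ofReal_mul_I_im, abs_mul,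
          abs_of_nonneg hr]
    _ ≤ ‖(r : ℂ) * exp ((ψ - arg w : ℝ) * I) - ‖w‖‖ := abs_im_le_norm _
    _ = ‖(r : ℂ) * exp (ψ * I) - w‖ := by
        rw [← hrot, norm_mul, norm_exp_ofReal_mul_I, mul_one]

-- At a zero of the sine the right side is the junk value `0 ^ (-α) = 0`.
theorem inv_norm_mul_exp_sub_rpow_le {α r : ℝ} (hα : 0 ≤ α) (hr : 0 < r) {ψ : ℝ} {w : ℂ}
    (hψ : Real.sin (ψ - arg w) ≠ 0) :
    (‖(r : ℂ) * exp (ψ * I) - w‖ ^ α)⁻¹ ≤ (r ^ α)⁻¹ * |Real.sin (ψ - arg w)| ^ (-α) := by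
  have hpos : 0 < r * |Real.sin (ψ - arg w)| := by positivity
  calc (‖(r : ℂ) * exp (ψ * I) - w‖ ^ α)⁻¹
      ≤ ((r * |Real.sin (ψ - arg w)|) ^ α)⁻¹ :=
        inv_anti₀ (by positivity)
          (rpow_le_rpow hpos.le (mul_abs_sin_sub_arg_le_norm_sub hr.le ψ w) hα)
    _ = (r ^ α)⁻¹ * |Real.sin (ψ - arg w)| ^ (-α) := by
        rw [mul_rpow hr.le (abs_nonneg _), mul_inv, rpow_neg (abs_nonneg _)]

theorem ae_sin_two_mul_sub_ne_zero (φ : ℝ) : ∀ᵐ θ : ℝ, Real.sin (2 * θ - φ) ≠ 0 := by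
  refine ae_iff.2 (measure_mono_null (fun θ hθ => ?_)
    ((Set.countable_range fun n : ℤ => (n * π + φ) / 2).measure_zero volume))
  obtain ⟨n, hn⟩ := sin_eq_zero_iff.mp (not_not.mp hθ)
  exact ⟨n, by dsimp only; rw [hn]; ring⟩

/-- For `0 < α < 1`, `r > 0` and any `w ∈ ℂ`:
`(1/2π) ∫₀^{2π} dθ/|re^{2iθ} − w|^α ≤ 1/((1−α) r^α)`. -/
theorem circle_integral_inverse_abs_estimate
    (α : ℝ) (h0 : 0 < α) (h1 : α < 1) (r : ℝ) (hr : 0 < r) (w : ℂ) :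
    (1 / (2 * π)) * ∫ θ in (0 : ℝ)..(2 * π),
        (‖(r : ℂ) * Complex.exp (2 * θ * I) - w‖ ^ α)⁻¹ ≤
      1 / ((1 - α) * r ^ α) := by
  have h_int := intervalIntegrable_abs_sin_rpow_neg h0.le h1
  have h_sub := (periodic_abs_sin_rpow (-α)).intervalIntegral_comp_two_mul_sub h_int (arg w)
  have h_dom : IntervalIntegrable (fun θ => (r ^ α)⁻¹ * |Real.sin (2 * θ - arg w)| ^ (-α))
      volume 0 (2 * π) :=
    (intervalIntegrable_comp_mul_sub h_int two_ne_zero _ _ _).const_mul _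
  have h_le : ∫ θ in (0 : ℝ)..(2 * π), (‖(r : ℂ) * Complex.exp (2 * θ * I) - w‖ ^ α)⁻¹ ≤
      (r ^ α)⁻¹ * (2 * (π / (1 - α))) := calc
    _ ≤ ∫ θ in (0 : ℝ)..(2 * π), (r ^ α)⁻¹ * |Real.sin (2 * θ - arg w)| ^ (-α) := by
        rw [integral_of_le (by positivity), integral_of_le (by positivity)]
        refine integral_mono_of_nonneg (.of_forall fun θ => by positivity) h_dom.1
          (ae_restrict_of_ae ?_)
        filter_upwards [ae_sin_two_mul_sub_ne_zero (arg w)] with θ hθ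
        exact_mod_cast inv_norm_mul_exp_sub_rpow_le h0.le hr hθ
    _ ≤ (r ^ α)⁻¹ * (2 * (π / (1 - α))) := by
        rw [intervalIntegral.integral_const_mul, h_sub, smul_eq_mul]
        gcongr
        exact integral_abs_sin_rpow_neg_le h0.le h1
  calc _ ≤ 1 / (2 * π) * ((r ^ α)⁻¹ * (2 * (π / (1 - α)))) := by gcongr
    _ = 1 / ((1 - α) * r ^ α) := by field_simp
end
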